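/- arXiv:2304.04296 — 4 statements merged into one kernel-verified Lean document; each statement's English description precedes it below -/
import Mathlib

section
/- For every integer k >= 2 and every proper coloring c of G_k, there exists a root-to-leaf branch of T_k whose k-1 tree nodes receive pairwise distinct colors under c; consequently c uses at least k colors. -/
/-- A structured tree: a rooted tree together with, at each internal node,
a graph on its children. A `leaf` is a tree with a single (leaf) node; a
`node ι c g` has children indexed by `ι`, subtrees `c i`, and the graph `g`
on the children. -/
inductive STree : Type 1 where
  | leaf : STree
  | node : (ι : Type) → (ι → STree) → SimpleGraph ι → STree

namespace STree

/-- The type of nodes of a structured tree. -/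
def NodeType : STree → Type
  | leaf => PUnit
  | node ι c _ => PUnit ⊕ Σ i : ι, NodeType (c i)

/-- The type of branches (root-to-leaf paths) of a structured tree. -/
def Branch : STree → Type
  | leaf => PUnit
  | node _ c _ => Σ i, Branch (c i)

/-- The root of a structured tree, as a node. -/
def root : (t : STree) → t.NodeType
  | leaf => PUnit.unit
  | node _ _ _ => Sum.inl PUnit.unit

/-- `onBranch t b u` means that the node `u` lies on the branch `b`. -/
def onBranch : (t : STree) → t.Branch → t.NodeType → Prop
  | leaf, _, _ => True
  | node _ c _, ⟨i, b⟩, u =>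
      match u with
      | Sum.inl _ => True
      | Sum.inr ⟨j, w⟩ => ∃ h : j = i, onBranch (c i) b (h ▸ w)

/-- Adjacency between tree nodes in the realization: the union of the edges
of the graphs `g(v)` placed on the children of each internal node `v`
(tree edges are *not* included). -/
def treeAdj : (t : STree) → t.NodeType → t.NodeType → Prop
  | leaf, _, _ => False
  | node ι c g, u, v =>
      match u, v with
      | Sum.inr ⟨i, u'⟩, Sum.inr ⟨j, v'⟩ =>
          (∃ h : i = j, treeAdj (c j) (h ▸ u') v') ∨
          (g.Adj i j ∧ u' = root (c i) ∧ v' = root (c j))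
      | _, _ => False

/-- The realization `R(T,g)` of a structured tree: its vertices are the tree
nodes together with the branches; edges are those of the graphs `g(v)`, plus
an edge from each branch vertex to every tree node lying on that branch. -/
def realization (t : STree) : SimpleGraph (t.NodeType ⊕ t.Branch) :=
  SimpleGraph.fromRel (fun x y =>
    match x, y with
    | Sum.inl u, Sum.inl v => treeAdj t u v
    | Sum.inl u, Sum.inr b => onBranch t b u
    | Sum.inr b, Sum.inl u => onBranch t b u
    | Sum.inr _, Sum.inr _ => False)

/-- The level of a node (the root is at level 1). -/
def level : (t : STree) → t.NodeType → ℕ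
  | leaf, _ => 1
  | node _ c _, u =>
      match u with
      | Sum.inl _ => 1
      | Sum.inr ⟨i, w⟩ => level (c i) w + 1

/-- `IsInternalGraphOf t ⟨ι, g⟩` means that `g` is the graph attached to some
internal node of `t` (on its children, indexed by `ι`). -/
inductive IsInternalGraphOf : STree → (Σ ι : Type, SimpleGraph ι) → Prop where
  | here : ∀ (ι : Type) (c : ι → STree) (g : SimpleGraph ι),
      IsInternalGraphOf (node ι c g) ⟨ι, g⟩
  | child : ∀ (ι : Type) (c : ι → STree) (g : SimpleGraph ι) (i : ι) (p),
      IsInternalGraphOf (c i) p → IsInternalGraphOf (node ι c g) p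

end STree

/-- Builds the structured tree in which all nodes at level `i` carry the
`i`-th graph of the list on their children (so the tree has `L.length + 1`
levels). -/
def buildTree : List (Σ V : Type, SimpleGraph V) → STree
  | [] => .leaf
  | ⟨ι, g⟩ :: rest => .node ι (fun _ => buildTree rest) g

/-- The realization of a structured tree, packaged with its vertex type. -/
def realizationSigma (t : STree) : Σ V : Type, SimpleGraph V :=
  ⟨t.NodeType ⊕ t.Branch, t.realization⟩

/-- `twincutList m` is the list `[G₂, G₃, …, G_{m+1}]` of twincut graphs. -/
def twincutList : ℕ → List (Σ V : Type, SimpleGraph V)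
  | 0 => []
  | m + 1 => twincutList m ++ [realizationSigma (buildTree (twincutList m))]

/-- The structured tree `T_{m+2}` whose realization is the twincut graph
`G_{m+2}`: it has `m + 1` levels, and every node at level `i ≤ m` carries
the graph `G_{i+1}` on its children. -/
def twincutTree (m : ℕ) : STree := buildTree (twincutList m)

/-- The twincut graphs: `G 1` is the one-vertex graph, and for `k ≥ 2`,
`G k` is the realization of the structured tree `T_k`. -/
def twincutG : ℕ → Σ V : Type, SimpleGraph V
  | 0 => ⟨PUnit, ⊥⟩
  | 1 => ⟨PUnit, ⊥⟩
  | (m + 2) => realizationSigma (twincutTree m)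

/-! Choose the branch greedily from the root. The children of a node at depth `i` induce
`G_{i+2}`, whose proper colourings use at least `i + 2` colours (induction on `k`), while the
path from the root to that node carries only `i + 1` colours; so some child has a fresh colour,
and we descend into it. The resulting branch is rainbow on its `k - 1` tree nodes, and its branch
vertex, adjacent to all of them, carries a `k`-th colour. -/

def SimpleGraph.ColoringsUseAtLeast (α : Type*) {V : Type*} (G : SimpleGraph V) (n : ℕ) : Prop :=
  ∀ c : V → α, (∀ x y, G.Adj x y → c x ≠ c y) → ∃ s : Finset α, s.card = n ∧ ↑s ⊆ Set.range c

namespace STree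

def branchNodes : (t : STree) → t.Branch → List t.NodeType
  | leaf, _ => [PUnit.unit]
  | node _ ts _, ⟨i, b⟩ =>
    Sum.inl PUnit.unit :: (branchNodes (ts i) b).map (fun w => Sum.inr ⟨i, w⟩)

theorem mem_branchNodes_node {ι : Type} {ts : ι → STree} {g : SimpleGraph ι} {i : ι}
    {b : (ts i).Branch} {u : (node ι ts g).NodeType} :
    u ∈ (node ι ts g).branchNodes ⟨i, b⟩ ↔
      u = Sum.inl PUnit.unit ∨ ∃ w ∈ (ts i).branchNodes b, Sum.inr ⟨i, w⟩ = u :=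
  List.mem_cons.trans (or_congr Iff.rfl List.mem_map)

theorem mem_branchNodes_iff : ∀ (t : STree) (b : t.Branch) (u : t.NodeType),
    u ∈ t.branchNodes b ↔ t.onBranch b u
  | leaf, _, _ => iff_of_true (List.mem_singleton.2 rfl) trivial
  | node _ ts _, ⟨i, b⟩, Sum.inl _ => iff_of_true List.mem_cons_self trivial
  | node _ ts _, ⟨i, b⟩, Sum.inr ⟨j, w⟩ => by
    refine mem_branchNodes_node.trans ?_
    by_cases hji : j = i
    · subst hji
      simp [onBranch, mem_branchNodes_iff (ts j) b w]
    · simp [onBranch, hji, Ne.symm hji]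

theorem length_branchNodes_buildTree :
    ∀ (L : List (Σ V : Type, SimpleGraph V)) (b : (buildTree L).Branch),
      ((buildTree L).branchNodes b).length = L.length + 1
  | [], _ => rfl
  | ⟨_, _⟩ :: rest, ⟨_, b⟩ =>
    congrArg (· + 1) ((List.length_map _).trans (length_branchNodes_buildTree rest b))

theorem realization_adj_of_onBranch {t : STree} {b : t.Branch} {u : t.NodeType}
    (h : t.onBranch b u) : t.realization.Adj (Sum.inl u) (Sum.inr b) :=
  (SimpleGraph.fromRel_adj _ _ _).2 ⟨Sum.inl_ne_inr, Or.inl h⟩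

theorem realization_adj_childRoot {ι : Type} {ts : ι → STree} {g : SimpleGraph ι} {i j : ι}
    (h : g.Adj i j) :
    (node ι ts g).realization.Adj (Sum.inl (Sum.inr ⟨i, (ts i).root⟩))
      (Sum.inl (Sum.inr ⟨j, (ts j).root⟩)) := by
  refine (SimpleGraph.fromRel_adj _ _ _).2
    ⟨fun heq => g.ne_of_adj h ?_, Or.inl (Or.inr ⟨h, rfl, rfl⟩)⟩
  exact congrArg Sigma.fst (Sum.inr_injective (Sum.inl_injective heq))

def childHom (ι : Type) (ts : ι → STree) (g : SimpleGraph ι) (i : ι) :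
    (ts i).realization →g (node ι ts g).realization where
  toFun := Sum.map (fun u => Sum.inr ⟨i, u⟩) (fun b => ⟨i, b⟩)
  map_rel' := by
    intro x y hxy
    rw [realization, SimpleGraph.fromRel_adj] at hxy ⊢
    obtain ⟨hne, hrel⟩ := hxy
    have hinj : Function.Injective
        (Sum.map (fun u => Sum.inr ⟨i, u⟩) (fun b => ⟨i, b⟩) :
          (ts i).NodeType ⊕ (ts i).Branch → (node ι ts g).NodeType ⊕ (node ι ts g).Branch) :=
      Sum.map_injective.2 ⟨fun _ _ h => eq_of_heq (Sigma.mk.inj (Sum.inr_injective h)).2,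
        fun _ _ h => eq_of_heq (Sigma.mk.inj h).2⟩
    refine ⟨hinj.ne hne, ?_⟩
    rcases x with u | b <;> rcases y with v | b'
    · exact hrel.imp (fun h => Or.inl ⟨rfl, h⟩) (fun h => Or.inl ⟨rfl, h⟩)
    · exact hrel.imp (fun h => ⟨rfl, h⟩) (fun h => ⟨rfl, h⟩)
    · exact hrel.imp (fun h => ⟨rfl, h⟩) (fun h => ⟨rfl, h⟩)
    · exact hrel.elim False.elim False.elim

end STree

open STree

section

variable {α : Type*}

/-- `F` plays the role of the colours already used on the path above the root of `buildTree L`. -/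
theorem exists_rainbow_branch_avoiding (L : List (Σ V : Type, SimpleGraph V))
    (c : (buildTree L).NodeType ⊕ (buildTree L).Branch → α)
    (hc : ∀ x y, (buildTree L).realization.Adj x y → c x ≠ c y)
    (F : Finset α) (hroot : c (Sum.inl (buildTree L).root) ∉ F)
    (hL : ∀ i (h : i < L.length), L[i].2.ColoringsUseAtLeast α (F.card + i + 2)) :
    ∃ b, (((buildTree L).branchNodes b).map (c ∘ Sum.inl)).Nodup ∧
      ∀ u ∈ (buildTree L).branchNodes b, c (Sum.inl u) ∉ F := by
  induction L generalizing F with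
  | nil => exact ⟨PUnit.unit, List.nodup_singleton _, fun _ hu => List.mem_singleton.1 hu ▸ hroot⟩
  | cons p rest ih =>
    obtain ⟨ι, g⟩ := p
    classical
    set c₀ := c (Sum.inl (Sum.inl PUnit.unit))
    obtain ⟨i₀, hi₀⟩ : ∃ i₀, c (Sum.inl (Sum.inr ⟨i₀, (buildTree rest).root⟩)) ∉ insert c₀ F := by
      obtain ⟨s, hs, hsc⟩ := hL 0 (Nat.succ_pos _) (fun i => c (Sum.inl (Sum.inr ⟨i, _⟩)))
        (fun _ _ h => hc _ _ (realization_adj_childRoot h))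
      have hlt : (insert c₀ F).card < s.card := (Finset.card_insert_le c₀ F).trans_lt (by omega)
      obtain ⟨a, has, haF⟩ := Finset.exists_mem_notMem_of_card_lt_card hlt
      obtain ⟨i₀, rfl⟩ := hsc has
      exact ⟨i₀, haF⟩
    have hcard : (insert c₀ F).card = F.card + 1 := Finset.card_insert_of_notMem hroot
    let φ := childHom ι (fun _ => buildTree rest) g i₀
    obtain ⟨b, hnodup, hfresh⟩ := ih (c ∘ φ) (fun _ _ h => hc _ _ (φ.map_adj h)) (insert c₀ F) hi₀
      (fun i h => by
        rw [hcard, show F.card + 1 + i = F.card + (i + 1) by omega]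
        exact hL (i + 1) (Nat.succ_lt_succ h))
    refine ⟨⟨i₀, b⟩, List.nodup_cons.2 ⟨?_, ?_⟩, ?_⟩
    · intro hc₀
      obtain ⟨_, hx, hcw⟩ := List.mem_map.1 hc₀
      obtain ⟨w, hw, rfl⟩ := List.mem_map.1 hx
      exact hfresh w hw (hcw ▸ Finset.mem_insert_self c₀ F)
    · exact (List.map_map ..).symm ▸ hnodup
    · intro u hu
      rcases mem_branchNodes_node.1 hu with rfl | ⟨w, hw, rfl⟩
      · exact hroot
      · exact fun hF => hfresh w hw (Finset.mem_insert_of_mem hF)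

theorem STree.exists_finset_card_of_nodup_branchNodes (t : STree)
    (c : t.NodeType ⊕ t.Branch → α) (hc : ∀ x y, t.realization.Adj x y → c x ≠ c y)
    (b : t.Branch) (hb : ((t.branchNodes b).map (c ∘ Sum.inl)).Nodup) :
    ∃ s : Finset α, s.card = (t.branchNodes b).length + 1 ∧ ↑s ⊆ Set.range c := by
  classical
  have hfresh : c (Sum.inr b) ∉ (t.branchNodes b).map (c ∘ Sum.inl) := fun h => by
    obtain ⟨u, hu, hcu⟩ := List.mem_map.1 h
    exact hc _ _ (realization_adj_of_onBranch ((mem_branchNodes_iff t b u).1 hu)) hcu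
  refine ⟨insert (c (Sum.inr b)) ((t.branchNodes b).map (c ∘ Sum.inl)).toFinset, ?_, ?_⟩
  · rw [Finset.card_insert_of_notMem (List.mem_toFinset.not.2 hfresh),
      List.toFinset_card_of_nodup hb, List.length_map]
  · rintro _ ha
    rcases Finset.mem_insert.1 ha with rfl | ha
    · exact ⟨_, rfl⟩
    · obtain ⟨u, -, rfl⟩ := List.mem_map.1 (List.mem_toFinset.1 ha)
      exact ⟨_, rfl⟩

theorem twincutList_eq_map_range (m : ℕ) :
    twincutList m = (List.range m).map (fun i => realizationSigma (twincutTree i)) := by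
  induction m with
  | zero => rfl
  | succ m ih => rw [twincutList, List.range_succ, List.map_append, ← ih]; rfl

theorem length_twincutList (m : ℕ) : (twincutList m).length = m := by
  simp [twincutList_eq_map_range]

theorem getElem_twincutList {m i : ℕ} (h : i < (twincutList m).length) :
    (twincutList m)[i] = realizationSigma (twincutTree i) := by
  simp [List.getElem_of_eq (twincutList_eq_map_range m) h]

theorem exists_rainbow_branch_twincutTree (m : ℕ)
    (hG : ∀ i < m, (twincutTree i).realization.ColoringsUseAtLeast α (i + 2))
    (c : (twincutTree m).NodeType ⊕ (twincutTree m).Branch → α)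
    (hc : ∀ x y, (twincutTree m).realization.Adj x y → c x ≠ c y) :
    ∃ b, (((twincutTree m).branchNodes b).map (c ∘ Sum.inl)).Nodup := by
  obtain ⟨b, hb, -⟩ := exists_rainbow_branch_avoiding (twincutList m) c hc ∅
    (Finset.notMem_empty _) fun i h => by
      rw [getElem_twincutList, Finset.card_empty, zero_add]
      exact hG i (length_twincutList m ▸ h)
  exact ⟨b, hb⟩

theorem coloringsUseAtLeast_twincutTree (m : ℕ) :
    (twincutTree m).realization.ColoringsUseAtLeast α (m + 2) := by
  induction m using Nat.strong_induction_on with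
  | _ m ih =>
    intro c hc
    obtain ⟨b, hb⟩ := exists_rainbow_branch_twincutTree m ih c hc
    obtain ⟨s, hs, hsc⟩ := (twincutTree m).exists_finset_card_of_nodup_branchNodes c hc b hb
    refine ⟨s, hs.trans ?_, hsc⟩
    rw [show ((twincutTree m).branchNodes b).length = (twincutList m).length + 1 from
      length_branchNodes_buildTree _ b, length_twincutList]

end

/-- for `k = m + 2 ≥ 2`, every proper coloring `c` of `G_k`
admits a root-to-leaf branch of `T_k` whose tree nodes receive pairwise
distinct colors; consequently `c` uses at least `k` colors. -/
theorem twincut_rainbow_branch (m : ℕ) {α : Type*}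
    (c : ((twincutTree m).NodeType ⊕ (twincutTree m).Branch) → α)
    (hc : ∀ x y, (twincutTree m).realization.Adj x y → c x ≠ c y) :
    (∃ b : (twincutTree m).Branch,
      ∀ u v : (twincutTree m).NodeType,
        (twincutTree m).onBranch b u → (twincutTree m).onBranch b v →
        u ≠ v → c (Sum.inl u) ≠ c (Sum.inl v)) ∧
    ∃ s : Finset α, s.card = m + 2 ∧ ↑s ⊆ Set.range c := by
  obtain ⟨b, hb⟩ := exists_rainbow_branch_twincutTree m
    (fun i _ => coloringsUseAtLeast_twincutTree i) c hc
  refine ⟨⟨b, fun u v hu hv huv hcuv => huv ?_⟩, coloringsUseAtLeast_twincutTree m c hc⟩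
  exact List.inj_on_of_nodup_map hb ((mem_branchNodes_iff _ b u).2 hu)
    ((mem_branchNodes_iff _ b v).2 hv) hcuv
end

section
/- For every k >= 1 and every branch vertex b of G_k, there exists a proper k-coloring of G_k in which b is the unique vertex colored k and, for each i in {1,...,k-1}, the tree node at level i on the branch b receives color i. -/
namespace STree

open SimpleGraph

theorem treeAdj_irrefl : ∀ (t : STree) (u : t.NodeType), ¬ t.treeAdj u u
  | leaf, _, h => h
  | node _ _ _, Sum.inl _, h => h
  | node _ c g, Sum.inr ⟨i, u⟩, h => by
    rcases h with ⟨_, h⟩ | ⟨h, -, -⟩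
    · exact treeAdj_irrefl (c i) u h
    · exact g.irrefl h

variable {α : Type*}

def mkColoring (t : STree) (f : t.NodeType ⊕ t.Branch → α)
    (hnode : ∀ u v, t.treeAdj u v → f (.inl u) ≠ f (.inl v))
    (hbranch : ∀ b u, t.onBranch b u → f (.inl u) ≠ f (.inr b)) :
    t.realization.Coloring α :=
  Coloring.mk f fun {x y} hxy => by
    obtain ⟨-, h | h⟩ := (fromRel_adj _ x y).1 hxy <;>
      rcases x with u | b <;> rcases y with v | b'
    all_goals first
      | exact hnode _ _ h | exact (hnode _ _ h).symm
      | exact hbranch _ _ h | exact (hbranch _ _ h).symm | exact h.elim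

def leafColoring (p q : α) (h : p ≠ q) : leaf.realization.Coloring α :=
  mkColoring leaf (Sum.elim (fun _ => p) fun _ => q) (fun _ _ h => h.elim) fun _ _ _ => h

@[simp] theorem leafColoring_inl (p q : α) (h : p ≠ q) (u : leaf.NodeType) :
    leafColoring p q h (.inl u) = p := rfl

@[simp] theorem leafColoring_inr (p q : α) (h : p ≠ q) (b : leaf.Branch) :
    leafColoring p q h (.inr b) = q := rfl

section Node

variable {ι : Type} {c : ι → STree} {g : SimpleGraph ι}

def childVertex (i : ι) :
    (c i).NodeType ⊕ (c i).Branch → (node ι c g).NodeType ⊕ (node ι c g).Branch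
  | .inl u => .inl (.inr ⟨i, u⟩)
  | .inr b => .inr ⟨i, b⟩

theorem eq_root_or_childVertex (x : (node ι c g).NodeType ⊕ (node ι c g).Branch) :
    x = .inl (node ι c g).root ∨ ∃ i y, x = childVertex i y := by
  rcases x with (⟨⟩ | ⟨i, u⟩) | ⟨i, b⟩
  exacts [.inl rfl, .inr ⟨i, .inl u, rfl⟩, .inr ⟨i, .inr b, rfl⟩]

def glueColoring (r : α) (C : ∀ i, (c i).realization.Coloring α)
    (hroot : ∀ i j, g.Adj i j → C i (.inl (c i).root) ≠ C j (.inl (c j).root))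
    (hbranch : ∀ i b, C i (.inr b) ≠ r) :
    (node ι c g).realization.Coloring α :=
  mkColoring (node ι c g)
    (fun
      | .inl (.inl _) => r
      | .inl (.inr ⟨i, u⟩) => C i (.inl u)
      | .inr ⟨i, b⟩ => C i (.inr b))
    (by
      rintro (_ | ⟨i, u⟩) (_ | ⟨j, v⟩) h
      any_goals exact h.elim
      rcases h with ⟨rfl, h⟩ | ⟨h, rfl, rfl⟩
      · refine (C _).valid ?_
        refine (fromRel_adj _ _ _).2 ⟨fun he => treeAdj_irrefl _ u ?_, .inl h⟩
        cases he; exact h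
      · exact hroot i j h)
    (by
      rintro ⟨i, b⟩ (_ | ⟨j, w⟩) h
      · exact (hbranch i b).symm
      · obtain ⟨rfl, h⟩ := h
        exact (C _).valid ((fromRel_adj _ _ _).2 ⟨Sum.inl_ne_inr, .inl h⟩))

@[simp] theorem glueColoring_root (r : α) (C : ∀ i, (c i).realization.Coloring α)
    (hroot hbranch) :
    glueColoring (g := g) r C hroot hbranch (.inl (node ι c g).root) = r := rfl

@[simp] theorem glueColoring_childVertex (r : α) (C : ∀ i, (c i).realization.Coloring α)
    (hroot hbranch) (i : ι) (y : (c i).NodeType ⊕ (c i).Branch) :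
    glueColoring (g := g) r C hroot hbranch (childVertex i y) = C i y := by
  rcases y with u | b <;> rfl

end Node

end STree

namespace SimpleGraph

def IsUniquelyTopColorable {V : Type*} (G : SimpleGraph V) (k : ℕ) : Prop :=
  ∀ w, ∃ C : G.Coloring ℕ, C w = k ∧ ∀ v, v ≠ w → C v < k

theorem IsUniquelyTopColorable.colorable {V : Type*} {G : SimpleGraph V} {k : ℕ}
    (h : G.IsUniquelyTopColorable k) : G.Colorable (k + 1) := by
  rcases isEmpty_or_nonempty V with hV | ⟨⟨w⟩⟩
  · exact ⟨Coloring.mk hV.elim fun {v} => hV.elim v⟩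
  · obtain ⟨C, hw, hlt⟩ := h w
    refine (colorable_iff_exists_bdd_nat_coloring _).2 ⟨C, fun v => ?_⟩
    by_cases hv : v = w
    · subst hv; omega
    · exact (hlt v hv).trans (Nat.lt_succ_self k)

theorem Coloring.ne_of_adj_of_raise_top {V : Type*} {G : SimpleGraph V} (χ : G.Coloring ℕ)
    {w : V} {k : ℕ} (hχ : ∀ v, v ≠ w → χ v < k) {ρ : V → ℕ} (hρ : ∀ v, v ≠ w → ρ v = χ v)
    (hw : k ≤ ρ w) {u v : V} (h : G.Adj u v) : ρ u ≠ ρ v := by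
  rcases eq_or_ne u w with rfl | hu
  · rw [hρ v h.ne.symm]; have := hχ v h.ne.symm; omega
  rcases eq_or_ne v w with rfl | hv
  · rw [hρ u hu]; have := hχ u hu; omega
  rw [hρ u hu, hρ v hv]
  exact χ.valid h

end SimpleGraph

open SimpleGraph STree

theorem buildTree_cons (ι : Type) (g : SimpleGraph ι) (R : List (Σ V : Type, SimpleGraph V)) :
    buildTree (⟨ι, g⟩ :: R) = node ι (fun _ => buildTree R) g := rfl

def LevelwiseTopColorable : ℕ → List (Σ V : Type, SimpleGraph V) → Prop
  | _, [] => True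
  | d, H :: R => H.2.IsUniquelyTopColorable (d + 1) ∧ LevelwiseTopColorable (d + 1) R

theorem LevelwiseTopColorable.colorable :
    ∀ {d : ℕ} {R : List (Σ V : Type, SimpleGraph V)}, LevelwiseTopColorable d R →
      ∀ H ∈ R, H.2.Colorable (d + R.length + 1)
  | _, _ :: R, ⟨hH, hR⟩, H, hmem => by
    rcases List.mem_cons.1 hmem with rfl | hmem
    · exact hH.colorable.mono (by simp only [List.length_cons]; omega)
    · simpa [Nat.add_right_comm, Nat.add_assoc] using hR.colorable H hmem

theorem LevelwiseTopColorable.concat :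
    ∀ {d : ℕ} {L : List (Σ V : Type, SimpleGraph V)} {H : Σ V : Type, SimpleGraph V},
      LevelwiseTopColorable d L → H.2.IsUniquelyTopColorable (d + L.length + 1) →
      LevelwiseTopColorable d (L ++ [H])
  | _, [], _, _, hH => ⟨hH, trivial⟩
  | _, _ :: L, _, ⟨hG, hL⟩, hH =>
    ⟨hG, hL.concat (by simpa [Nat.add_right_comm, Nat.add_assoc] using hH)⟩

/-- `A` stands for the colors above the root: the bound says that they and the colors on the nodes
of any branch number fewer than `N`, so every branch finds a free color outside `A`. -/
theorem exists_coloring_avoiding {N : ℕ} :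
    ∀ {R : List (Σ V : Type, SimpleGraph V)}, (∀ H ∈ R, H.2.Colorable N) →
      ∀ (A : Finset ℕ) (r : ℕ), r < N → (insert r A).card + R.length < N →
      ∃ C : (buildTree R).realization.Coloring ℕ,
        (∀ x, C x < N) ∧ C (.inl (buildTree R).root) = r ∧ ∀ b, C (.inr b) ∉ A
  | [], _, A, r, hr, hA => by
    obtain ⟨q, hqN, hqA⟩ := Finset.exists_mem_notMem_of_card_lt_card
      (s := insert r A) (t := Finset.range N) (by simpa using hA)
    refine ⟨leafColoring r q (by rintro rfl; simp at hqA), ?_, rfl,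
      fun _ h => hqA (Finset.mem_insert_of_mem h)⟩
    rintro (_ | _)
    exacts [hr, Finset.mem_range.1 hqN]
  | ⟨ι, g⟩ :: R, hR, A, r, hr, hA => by
    obtain ⟨χ, hχ⟩ := (colorable_iff_exists_bdd_nat_coloring N).1 (hR _ List.mem_cons_self)
    have hchild (i : ι) := exists_coloring_avoiding (fun H hH => hR H (List.mem_cons_of_mem _ hH))
      (insert r A) (χ i) (hχ i) (by
        have := Finset.card_insert_le (χ i) (insert r A)
        simp only [List.length_cons] at hA; omega)
    choose C hCN hCroot hCA using hchild
    rw [buildTree_cons]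
    refine ⟨glueColoring r C (fun i j h => by simpa only [hCroot] using χ.valid h)
      (fun i b h => hCA i b (h ▸ Finset.mem_insert_self r A)), fun x => ?_, rfl, ?_⟩
    · obtain rfl | ⟨i, y, rfl⟩ := eq_root_or_childVertex x
      · exact hr
      · rw [glueColoring_childVertex]; exact hCN i y
    · rintro ⟨i, b⟩ h
      exact hCA i b (Finset.mem_insert_of_mem h)

/-- `d` counts the levels above `t`, whose nodes on the path to `t` are colored `0, …, d - 1`;
the root and the branches of `t` keep away from those colors. -/
structure IsTopColoring (t : STree) (d N : ℕ) (x : t.NodeType ⊕ t.Branch)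
    (C : t.realization.Coloring ℕ) : Prop where
  apply_target : C x = N
  lt_of_ne : ∀ y, y ≠ x → C y < N
  le_root : d ≤ C (.inl t.root)
  le_branch : ∀ b, d ≤ C (.inr b)
  level_eq : ∀ b, x = .inr b → ∀ u, t.onBranch b u → C (.inl u) + 1 = d + t.level u

theorem exists_isTopColoring_leaf (d : ℕ) :
    ∀ x, ∃ C, IsTopColoring leaf d (d + 1) x C
  | .inl ⟨⟩ => ⟨leafColoring (d + 1) d (by omega), rfl,
      by rintro (_ | _) h; exacts [(h rfl).elim, by simp], by simp, by simp, nofun⟩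
  | .inr ⟨⟩ => ⟨leafColoring d (d + 1) (by omega), rfl,
      by rintro (_ | _) h; exacts [by simp, (h rfl).elim], by simp, by simp, fun _ _ _ _ => rfl⟩

section Node

variable {ι : Type} {g : SimpleGraph ι} {R : List (Σ V : Type, SimpleGraph V)} {d : ℕ}

theorem exists_isTopColoring_root (hg : g.IsUniquelyTopColorable (d + 1))
    (hR : LevelwiseTopColorable (d + 1) R) :
    ∃ C, IsTopColoring (node ι (fun _ => buildTree R) g) d (d + 1 + R.length + 1)
      (.inl (node ι _ g).root) C := by
  obtain ⟨χ, hχ⟩ := (colorable_iff_exists_bdd_nat_coloring _).1 hg.colorable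
  have hchild (i : ι) := exists_coloring_avoiding (R := R) hR.colorable
    (Finset.range d) (χ i) (by have := hχ i; omega) (by
      have := Finset.card_insert_le (χ i) (Finset.range d)
      rw [Finset.card_range] at this; omega)
  choose C hCN hCroot hCA using hchild
  refine ⟨glueColoring _ C (fun i j h => by simpa only [hCroot] using χ.valid h)
    (fun i b => (hCN i _).ne), rfl, fun y hy => ?_, by simp only [glueColoring_root]; omega, ?_,
    nofun⟩
  · obtain rfl | ⟨i, y, rfl⟩ := eq_root_or_childVertex y
    · exact (hy rfl).elim
    · rw [glueColoring_childVertex]; exact hCN i y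
  · rintro ⟨i, b⟩
    exact not_lt.1 (mt Finset.mem_range.2 (hCA i b))

theorem exists_isTopColoring_childVertex (hg : g.IsUniquelyTopColorable (d + 1))
    (hR : LevelwiseTopColorable (d + 1) R) (i₀ : ι)
    {x : (buildTree R).NodeType ⊕ (buildTree R).Branch}
    {C₀ : (buildTree R).realization.Coloring ℕ}
    (hC₀ : IsTopColoring (buildTree R) (d + 1) (d + 1 + R.length + 1) x C₀) :
    ∃ C, IsTopColoring (node ι (fun _ => buildTree R) g) d (d + 1 + R.length + 1)
      (childVertex i₀ x) C := by
  classical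
  obtain ⟨χ, -, hχlt⟩ := hg i₀
  have hdead (i : ι) (hi : i ≠ i₀) := exists_coloring_avoiding (R := R) hR.colorable
    (Finset.range (d + 1)) (χ i) (by have := hχlt i hi; omega) (by
      rw [Finset.insert_eq_of_mem (Finset.mem_range.2 (hχlt i hi)), Finset.card_range]; omega)
  choose D hDN hDroot hDA using hdead
  let C (i : ι) := if hi : i = i₀ then C₀ else D i hi
  have hCi₀ : C i₀ = C₀ := dif_pos rfl
  have hCD (i : ι) (hi : i ≠ i₀) : C i = D i hi := dif_neg hi
  have hroot (i j : ι) (h : g.Adj i j) :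
      C i (.inl (buildTree R).root) ≠ C j (.inl (buildTree R).root) :=
    χ.ne_of_adj_of_raise_top hχlt (ρ := fun i => C i (.inl (buildTree R).root))
      (fun i hi => by rw [hCD i hi, hDroot]) (by rw [hCi₀]; exact hC₀.le_root) h
  have hbranch (i : ι) (b : (buildTree R).Branch) : d + 1 ≤ C i (.inr b) := by
    rcases eq_or_ne i i₀ with rfl | hi
    · rw [hCi₀]; exact hC₀.le_branch b
    · rw [hCD i hi]; exact not_lt.1 (mt Finset.mem_range.2 (hDA i hi b))
  refine ⟨glueColoring d C hroot (fun i b => by have := hbranch i b; omega), ?_, ?_, ?_, ?_, ?_⟩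
  · rw [glueColoring_childVertex, hCi₀, hC₀.apply_target]
  · intro y hy
    obtain rfl | ⟨i, y, rfl⟩ := eq_root_or_childVertex y
    · simp only [glueColoring_root]; omega
    rw [glueColoring_childVertex]
    rcases eq_or_ne i i₀ with rfl | hi
    · rw [hCi₀]; exact hC₀.lt_of_ne y (fun h => hy (h ▸ rfl))
    · rw [hCD i hi]; exact hDN i hi y
  · simp only [glueColoring_root]; rfl
  · rintro ⟨i, b⟩
    exact (hbranch i b).trans' (Nat.le_succ d)
  · rintro ⟨i, b⟩ hx (⟨⟩ | ⟨j, w⟩) hu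
    · rfl
    rcases x with _ | b <;> cases hx
    obtain ⟨rfl, hw⟩ := hu
    show C _ (.inl w) + 1 = d + ((buildTree R).level w + 1)
    rw [hCi₀, hC₀.level_eq b rfl w hw]; omega

end Node

theorem exists_isTopColoring : ∀ {R : List (Σ V : Type, SimpleGraph V)} {d : ℕ},
    LevelwiseTopColorable d R → ∀ x, ∃ C, IsTopColoring (buildTree R) d (d + R.length + 1) x C
  | [], d, _, x => exists_isTopColoring_leaf d x
  | ⟨ι, g⟩ :: R, d, ⟨hg, hR⟩, x => by
    rw [List.length_cons, show d + (R.length + 1) = d + 1 + R.length by omega]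
    rcases eq_root_or_childVertex (c := fun _ => buildTree R) (g := g) x with rfl | ⟨i, y, rfl⟩
    · exact exists_isTopColoring_root hg hR
    · obtain ⟨C₀, hC₀⟩ := exists_isTopColoring hR y
      exact exists_isTopColoring_childVertex hg hR i hC₀

theorem twincutList_length : ∀ m, (twincutList m).length = m
  | 0 => rfl
  | m + 1 => by simp [twincutList, twincutList_length m]

theorem levelwiseTopColorable_twincutList : ∀ m, LevelwiseTopColorable 0 (twincutList m)
  | 0 => trivial
  | m + 1 => (levelwiseTopColorable_twincutList m).concat fun x =>
    let ⟨C, hC⟩ := exists_isTopColoring (levelwiseTopColorable_twincutList m) x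
    ⟨C, hC.apply_target, hC.lt_of_ne⟩

/-- for every branch vertex `b` of `G_k` (`k = m + 2`), there is
a proper `k`-coloring in which `b` is the only vertex with the last color and
the tree node at level `i` on the branch `b` gets color `i` (colors being
`1, …, k`, represented by `Fin k` shifted by one). -/
theorem twincut_coloring_branch (m : ℕ) (b : (twincutTree m).Branch) :
    ∃ c : ((twincutTree m).NodeType ⊕ (twincutTree m).Branch) → Fin (m + 2),
      (∀ x y, (twincutTree m).realization.Adj x y → c x ≠ c y) ∧
      c (Sum.inr b) = Fin.last (m + 1) ∧
      (∀ x, c x = Fin.last (m + 1) → x = Sum.inr b) ∧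
      (∀ u : (twincutTree m).NodeType, (twincutTree m).onBranch b u →
        (c (Sum.inl u)).val + 1 = (twincutTree m).level u) := by
  obtain ⟨C, hC⟩ := exists_isTopColoring (levelwiseTopColorable_twincutList m) (.inr b)
  rw [twincutList_length, zero_add] at hC
  have hlt (y) : C y < m + 2 := by
    by_cases hy : y = .inr b
    · rw [hy, hC.apply_target]; omega
    · exact (hC.lt_of_ne y hy).trans (Nat.lt_succ_self _)
  refine ⟨fun y => ⟨C y, hlt y⟩, fun x y h => Fin.ne_of_val_ne (C.valid h),
    Fin.ext hC.apply_target, fun y hy => ?_,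
    fun u hu => (hC.level_eq b rfl u hu).trans (zero_add _)⟩
  by_contra hne
  exact (hC.lt_of_ne y hne).ne (congrArg Fin.val hy)
end

section
/- If a graph G has no pair of non-adjacent twins and no vertex cutset that is an independent set of size at most two, and G is a member of the closure class C, then G has at most two vertices. In particular, every graph in C on at least three vertices has a pair of non-adjacent twins or an independent vertex cutset of size at most two. -/
/-- Vertex replication: add a new vertex (a non-adjacent twin of `v`) with the
same neighborhood as `v`, non-adjacent to `v`. Equivalently, substitute `v`
by an independent set of size two. -/
def replicateGraph {V : Type} (G : SimpleGraph V) (v : V) : SimpleGraph (V ⊕ Unit) :=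
  SimpleGraph.fromRel (fun x y =>
    match x, y with
    | Sum.inl a, Sum.inl b => G.Adj a b
    | Sum.inl a, Sum.inr _ => G.Adj a v
    | Sum.inr _, Sum.inl b => G.Adj v b
    | Sum.inr _, Sum.inr _ => False)

/-- Gluing the graphs `G` and `H` along the set `S`, embedded in `G` via `f`
and in `H` via `h`: the two copies of `S` are identified. -/
def glueGraphs {V W S : Type} (G : SimpleGraph V) (H : SimpleGraph W)
    (f : S → V) (h : S → W) : SimpleGraph (V ⊕ {w : W // w ∉ Set.range h}) :=
  SimpleGraph.fromRel (fun x y =>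
    match x, y with
    | Sum.inl a, Sum.inl b => G.Adj a b
    | Sum.inl a, Sum.inr w => ∃ s, f s = a ∧ H.Adj (h s) w.val
    | Sum.inr w, Sum.inl a => ∃ s, f s = a ∧ H.Adj (h s) w.val
    | Sum.inr w, Sum.inr w' => H.Adj w.val w'.val)

/-- The class `𝒞`: the smallest class of graphs (closed under isomorphism)
containing all graphs on at most two vertices, closed under vertex
replication (adding a non-adjacent twin) and under gluing two of its members
along an independent set of size at most two. -/
inductive InC : ∀ V : Type, SimpleGraph V → Prop where
  | small (V : Type) (G : SimpleGraph V) : Finite V → Nat.card V ≤ 2 → InC V G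
  | iso (V W : Type) (G : SimpleGraph V) (H : SimpleGraph W) :
      InC V G → Nonempty (G ≃g H) → InC W H
  | replicate (V : Type) (G : SimpleGraph V) (v : V) :
      InC V G → InC (V ⊕ Unit) (replicateGraph G v)
  | glue (V W S : Type) (G : SimpleGraph V) (H : SimpleGraph W) (f : S → V) (h : S → W) :
      InC V G → InC W H → Function.Injective f → Function.Injective h →
      Finite S → Nat.card S ≤ 2 →
      (∀ s s' : S, ¬ G.Adj (f s) (f s')) → (∀ s s' : S, ¬ H.Adj (h s) (h s')) →
      InC (V ⊕ {w : W // w ∉ Set.range h}) (glueGraphs G H f h)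

/-- `G` has a pair of non-adjacent twins: two distinct non-adjacent vertices
with the same neighborhood. -/
def HasNonadjTwins {V : Type} (G : SimpleGraph V) : Prop :=
  ∃ u v : V, u ≠ v ∧ ¬ G.Adj u v ∧ ∀ w, G.Adj u w ↔ G.Adj v w

/-- `G` has a vertex cutset which is an independent set of size at most two:
a set `S` of at most two pairwise non-adjacent vertices whose removal leaves
a disconnected graph. -/
def HasSmallIndepCutset {V : Type} (G : SimpleGraph V) : Prop :=
  ∃ S : Set V, S.ncard ≤ 2 ∧ (∀ a ∈ S, ∀ b ∈ S, ¬ G.Adj a b) ∧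
    ¬ (G.induce Sᶜ).Connected


/-! Induction on the construction of `𝒞`. Both properties are invariant under isomorphism,
and a replicated vertex is a non-adjacent twin of the original one. When `G` and `H` are glued
along `S`, either one of them contributes no vertex outside `S`, and the result is isomorphic
to the other one, or the image of `S` is an independent set of size at most two separating the
remaining vertices of `G` from those of `H`. -/

open SimpleGraph

section

variable {V W : Type} {G : SimpleGraph V} {H : SimpleGraph W}

lemma HasNonadjTwins.of_iso (e : G ≃g H) (hG : HasNonadjTwins G) : HasNonadjTwins H := by
  obtain ⟨u, v, huv, hnadj, htwin⟩ := hG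
  refine ⟨e u, e v, e.injective.ne huv, e.map_adj_iff.not.mpr hnadj, fun w => ?_⟩
  have := htwin (e.symm w)
  rwa [← e.map_adj_iff, ← e.map_adj_iff, e.apply_symm_apply] at this

lemma HasSmallIndepCutset.of_iso (e : G ≃g H) (hG : HasSmallIndepCutset G) :
    HasSmallIndepCutset H := by
  obtain ⟨S, hcard, hindep, hdisc⟩ := hG
  refine ⟨e '' S, (Set.ncard_image_of_injective S e.injective).trans_le hcard, ?_, ?_⟩
  · rintro _ ⟨a, ha, rfl⟩ _ ⟨b, hb, rfl⟩
    exact e.map_adj_iff.not.mpr (hindep a ha b hb)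
  · have hbij : Set.BijOn e Sᶜ (e '' S)ᶜ := by
      rw [← Set.image_compl_eq e.bijective]
      exact e.injective.injOn.bijOn_image
    exact fun hconn => hdisc ((e.induce hbij).connected_iff.mpr hconn)

lemma hasNonadjTwins_or_hasSmallIndepCutset_of_iso (e : G ≃g H)
    (hG : 3 ≤ Nat.card V → HasNonadjTwins G ∨ HasSmallIndepCutset G) :
    3 ≤ Nat.card W → HasNonadjTwins H ∨ HasSmallIndepCutset H := by
  rw [← Nat.card_congr e.toEquiv]
  exact fun h3 => (hG h3).imp (.of_iso e) (.of_iso e)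

lemma SimpleGraph.Reachable.eq_of_forall_adj {β : Type*} {u v : V} (φ : V → β)
    (hφ : ∀ a b, G.Adj a b → φ a = φ b) (huv : G.Reachable u v) : φ u = φ v := by
  rw [reachable_eq_reflTransGen] at huv
  simpa only [Relation.reflTransGen_eq_self] using huv.lift φ hφ

lemma hasNonadjTwins_replicateGraph (v : V) : HasNonadjTwins (replicateGraph G v) := by
  refine ⟨.inl v, .inr (), Sum.inl_ne_inr, by simp [replicateGraph], ?_⟩
  rintro (b | _)
  · simpa [replicateGraph, G.adj_comm v] using fun hb => hb.ne'
  · simp [replicateGraph]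

section glueGraphs

variable {S : Type} {f : S → V} {h : S → W}

@[simp]
lemma glueGraphs_adj_inl_inl {a b : V} :
    (glueGraphs G H f h).Adj (.inl a) (.inl b) ↔ G.Adj a b := by
  simpa [glueGraphs, G.adj_comm b a] using fun hab : G.Adj a b => hab.ne

@[simp]
lemma glueGraphs_adj_inl_inr {a : V} {w : {w : W // w ∉ Set.range h}} :
    (glueGraphs G H f h).Adj (.inl a) (.inr w) ↔ ∃ s, f s = a ∧ H.Adj (h s) w := by
  simp [glueGraphs]

@[simp]
lemma glueGraphs_adj_inr_inl {a : V} {w : {w : W // w ∉ Set.range h}} :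
    (glueGraphs G H f h).Adj (.inr w) (.inl a) ↔ ∃ s, f s = a ∧ H.Adj (h s) w := by
  simp [glueGraphs]

@[simp]
lemma glueGraphs_adj_inr_inr {w w' : {w : W // w ∉ Set.range h}} :
    (glueGraphs G H f h).Adj (.inr w) (.inr w') ↔ H.Adj w w' := by
  simpa [glueGraphs, H.adj_comm w'.1] using fun hww : H.Adj w w' => Subtype.coe_ne_coe.mp hww.ne

def glueGraphsIsoOfIsEmpty [IsEmpty {w : W // w ∉ Set.range h}] : glueGraphs G H f h ≃g G where
  toEquiv := Equiv.sumEmpty _ _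
  map_rel_iff' := by
    rintro (a | w) (b | w)
    · simp
    all_goals exact isEmptyElim w

open Classical in
noncomputable def glueGraphsIsoOfBijective (hh : Function.Injective h) (hf : Function.Bijective f)
    (hG : ∀ s s', ¬ G.Adj (f s) (f s')) (hH : ∀ s s', ¬ H.Adj (h s) (h s')) :
    glueGraphs G H f h ≃g H where
  toEquiv := (((Equiv.ofBijective f hf).symm.trans (Equiv.ofInjective h hh)).sumCongr
    (Equiv.refl _)).trans (Equiv.sumCompl (· ∈ Set.range h))
  map_rel_iff' := by
    rintro (a | w) (b | w')
    all_goals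
      try obtain ⟨s, rfl⟩ := hf.2 a
      try obtain ⟨s', rfl⟩ := hf.2 b
      simp [hf.1.eq_iff, hG, hH, H.adj_comm]

lemma hasSmallIndepCutset_glueGraphs (hf : Function.Injective f) (hS : Nat.card S ≤ 2)
    (hG : ∀ s s', ¬ G.Adj (f s) (f s')) {v : V} (hv : v ∉ Set.range f)
    (w : {w : W // w ∉ Set.range h}) : HasSmallIndepCutset (glueGraphs G H f h) := by
  refine ⟨.inl '' Set.range f, ?_, ?_, fun hconn => ?_⟩
  · rwa [Set.ncard_image_of_injective _ Sum.inl_injective, Set.ncard_range_of_injective hf]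
  · rintro _ ⟨_, ⟨s, rfl⟩, rfl⟩ _ ⟨_, ⟨s', rfl⟩, rfl⟩
    simpa using hG s s'
  · have hside : ∀ a b : ↥(Sum.inl '' Set.range f)ᶜ,
        (glueGraphs G H f h).Adj a.1 b.1 → a.1.isLeft = b.1.isLeft := by
      rintro ⟨a | a, ha⟩ ⟨b | b, hb⟩ hab
      · rfl
      · obtain ⟨s, rfl, -⟩ := glueGraphs_adj_inl_inr.mp hab
        exact absurd ⟨f s, ⟨s, rfl⟩, rfl⟩ ha
      · obtain ⟨s, rfl, -⟩ := glueGraphs_adj_inr_inl.mp hab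
        exact absurd ⟨f s, ⟨s, rfl⟩, rfl⟩ hb
      · rfl
    have hreach := hconn.preconnected ⟨.inl v, by simpa using hv⟩ ⟨.inr w, by simp⟩
    simpa using hreach.eq_of_forall_adj _ fun a b hab => hside a b hab

end glueGraphs

theorem InC.hasNonadjTwins_or_hasSmallIndepCutset (hG : InC V G) :
    3 ≤ Nat.card V → HasNonadjTwins G ∨ HasSmallIndepCutset G := by
  induction hG with
  | small V G _ hcard => omega
  | iso V W G H _ hiso ih => exact hasNonadjTwins_or_hasSmallIndepCutset_of_iso hiso.some ih
  | replicate V G v _ _ => exact fun _ => .inl (hasNonadjTwins_replicateGraph v)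
  | glue V W S G H f h _ _ hf hh _ hS hGf hHh ihG ihH =>
    by_cases hnew : IsEmpty {w : W // w ∉ Set.range h}
    · exact hasNonadjTwins_or_hasSmallIndepCutset_of_iso glueGraphsIsoOfIsEmpty.symm ihG
    obtain ⟨w⟩ := not_isEmpty_iff.mp hnew
    by_cases hsurj : Function.Surjective f
    · exact hasNonadjTwins_or_hasSmallIndepCutset_of_iso
        (glueGraphsIsoOfBijective hh ⟨hf, hsurj⟩ hGf hHh).symm ihH
    obtain ⟨v, hv⟩ := not_forall.mp hsurj
    exact fun _ => .inr (hasSmallIndepCutset_glueGraphs hf hS hGf hv w)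

end

/-- a graph in `𝒞` with no pair of non-adjacent twins and no
independent vertex cutset of size at most two has at most two vertices; in
particular every graph of `𝒞` on at least three vertices has non-adjacent
twins or an independent cutset of size at most two. -/
theorem inC_structure (V : Type) (G : SimpleGraph V) (hG : InC V G) :
    (¬ HasNonadjTwins G → ¬ HasSmallIndepCutset G → Nat.card V ≤ 2) ∧
    (3 ≤ Nat.card V → HasNonadjTwins G ∨ HasSmallIndepCutset G) := by
  have key := hG.hasNonadjTwins_or_hasSmallIndepCutset
  exact ⟨fun hT hC => not_lt.mp fun h3 => (key h3).elim hT hC, key⟩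
end

section
/- The 3-dimensional cube graph Q_3 has no pair of non-adjacent twins and no independent vertex cutset of size at most two; consequently Q_3 is not an induced subgraph of any twincut graph. -/
/-- The 3-dimensional cube graph `Q₃` on the 8 vertices `Fin 3 → Bool`:
two vertices are adjacent when they differ in exactly one coordinate. -/
def cubeGraph : SimpleGraph (Fin 3 → Bool) :=
  SimpleGraph.fromRel (fun x y => ∃! i, x i ≠ y i)

/-! The cube `Q₃` is 3-connected and no two of its vertices have the same neighbourhood; every
induced subgraph `H` of a twincut graph on at least three vertices fails one of these. In a
realization `R(node ι c g)`, the root vertex `r` and the root `ρᵢ` of the `i`-th subtree have the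
same neighbours inside the `i`-th part, and `{r, ρᵢ}` separates that part from the rest. So a copy
of a 3-connected, twin-free `H` either uses only subtree roots, giving a copy of `H` in `g`, or
lies in `{r} ∪` the `i`-th part and avoids one of `r`, `ρᵢ`; moving it off `r` onto `ρᵢ` gives a
copy of `H` in `R(c i)`. Induction over the tree and over the twincut hierarchy concludes. -/

lemma isEmpty_embedding_of_card_lt {V W : Type} [Finite W] {G : SimpleGraph V}
    {K : SimpleGraph W} (h : Nat.card W < Nat.card V) : IsEmpty (G ↪g K) :=
  ⟨fun f => (Nat.card_le_card_of_injective f f.injective).not_gt h⟩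

namespace SimpleGraph.Embedding

variable {U V W : Type} {G : SimpleGraph U} {H : SimpleGraph V} {K : SimpleGraph W}

lemma nonempty_of_forall_mem_range (f : G ↪g K) (e : H ↪g K) (h : ∀ x, ∃ y, e y = f x) :
    Nonempty (G ↪g H) := by
  choose φ hφ using h
  refine ⟨⟨⟨φ, fun x y hxy => f.injective ?_⟩, fun {x y} => ?_⟩⟩
  · rw [← hφ x, ← hφ y, hxy]
  · change H.Adj (φ x) (φ y) ↔ G.Adj x y
    rw [← e.map_adj_iff, hφ, hφ, f.map_adj_iff]

lemma hasNonadjTwins_of_twin (f : G ↪g K) {a b : U} (hab : a ≠ b)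
    (hadj : ¬ K.Adj (f a) (f b)) (htwin : ∀ x, K.Adj (f a) (f x) ↔ K.Adj (f b) (f x)) :
    HasNonadjTwins G :=
  ⟨a, b, hab, by rwa [← f.map_adj_iff], fun x => by simpa only [f.map_adj_iff] using htwin x⟩

open Classical in
noncomputable def replaceTwin (f : G ↪g K) (u v : W) (hv : ∀ x, f x ≠ v)
    (htwin : ∀ x, K.Adj u (f x) ↔ K.Adj v (f x)) : G ↪g K where
  toFun x := if f x = u then v else f x
  inj' x y hxy := by
    beta_reduce at hxy
    split_ifs at hxy with hx hy hy
    · exact f.injective (hx.trans hy.symm)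
    exacts [(hv y hxy.symm).elim, (hv x hxy).elim, f.injective hxy]
  map_rel_iff' {x y} := by
    change K.Adj (if f x = u then v else f x) (if f y = u then v else f y) ↔ G.Adj x y
    split_ifs with hx hy hy
    · rw [f.injective (hx.trans hy.symm)]; simp
    · rw [← htwin, ← hx, f.map_adj_iff]
    · rw [K.adj_comm, ← htwin, ← hy, K.adj_comm, f.map_adj_iff]
    · exact f.map_adj_iff

lemma exists_avoiding_twin (hG : ¬ HasNonadjTwins G) (f : G ↪g K) {u v : W} (huv : u ≠ v)
    (hnadj : ¬ K.Adj u v) (htwin : ∀ x, K.Adj u (f x) ↔ K.Adj v (f x)) :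
    ∃ f' : G ↪g K, ∀ x, f' x ≠ u ∧ (f' x = v ∨ f' x = f x) := by
  classical
  by_cases hv : ∃ b, f b = v
  · obtain ⟨b, rfl⟩ := hv
    by_cases hu : ∃ a, f a = u
    · obtain ⟨a, rfl⟩ := hu
      exact (hG (f.hasNonadjTwins_of_twin (fun h => huv (congrArg f h)) hnadj htwin)).elim
    · push Not at hu
      exact ⟨f, fun x => ⟨hu x, Or.inr rfl⟩⟩
  · push Not at hv
    refine ⟨f.replaceTwin u v hv htwin, fun x => ?_⟩
    change (if f x = u then v else f x) ≠ u ∧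
      ((if f x = u then v else f x) = v ∨ (if f x = u then v else f x) = f x)
    split_ifs with hx
    exacts [⟨huv.symm, Or.inl rfl⟩, ⟨hx, Or.inr rfl⟩]

end SimpleGraph.Embedding

section Cutsets

variable {V : Type} {G : SimpleGraph V}

lemma forall_of_not_hasSmallIndepCutset (hG : ¬ HasSmallIndepCutset G) {S : Set V}
    (hS : S.ncard ≤ 2) (hSind : ∀ a ∈ S, ∀ b ∈ S, ¬ G.Adj a b) {P : V → Prop}
    (hP : ∀ x y, x ∉ S → y ∉ S → G.Adj x y → P x → P y) {a : V} (ha : a ∉ S) (hPa : P a)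
    (x : V) (hx : x ∉ S) : P x := by
  have hconn : (G.induce Sᶜ).Connected := by
    by_contra h
    exact hG ⟨S, hS, hSind, h⟩
  obtain ⟨p⟩ := hconn.preconnected ⟨a, ha⟩ ⟨x, hx⟩
  suffices ∀ u w : ↥Sᶜ, (G.induce Sᶜ).Walk u w → P u → P w from this _ _ p hPa
  intro u w q
  induction q with
  | nil => exact id
  | @cons u w' _ h _ ih => exact fun hu => ih (hP u w' u.2 w'.2 h hu)

lemma exists_adj_of_not_hasSmallIndepCutset [Nontrivial V] (hG : ¬ HasSmallIndepCutset G)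
    (x : V) : ∃ y, G.Adj x y := by
  by_contra! hx
  have hall := forall_of_not_hasSmallIndepCutset hG (S := ∅) (by simp) (by simp)
    (P := (· = x)) (fun _ y _ _ h hux => (hx y (hux ▸ h)).elim) (Set.notMem_empty x) rfl
  obtain ⟨y, hy⟩ := exists_ne x
  exact hy (hall y (Set.notMem_empty y))

end Cutsets

namespace SimpleGraph

variable {V : Type} {G : SimpleGraph V}

/-- A decidable witness of reachability: a walk of length at most `n` from `x` to `y` whose
vertices other than `x` lie in `s`. -/
def ReachWithin (G : SimpleGraph V) (s : Set V) : ℕ → V → V → Prop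
  | 0, x, y => x = y
  | n + 1, x, y => x = y ∨ ∃ z ∈ s, G.Adj x z ∧ G.ReachWithin s n z y

instance instDecidableReachWithin [Fintype V] [DecidableEq V] [DecidableRel G.Adj] (s : Set V)
    [DecidablePred (· ∈ s)] : ∀ n, DecidableRel (G.ReachWithin s n)
  | 0 => fun x y => inferInstanceAs (Decidable (x = y))
  | n + 1 => fun x y =>
    have := instDecidableReachWithin s n
    inferInstanceAs (Decidable (x = y ∨ ∃ z ∈ s, G.Adj x z ∧ G.ReachWithin s n z y))

lemma ReachWithin.reachable_induce {s t : Set V} (hst : s ⊆ t) {n : ℕ} {x y : V}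
    (h : G.ReachWithin s n x y) (hx : x ∈ t) (hy : y ∈ t) :
    (G.induce t).Reachable ⟨x, hx⟩ ⟨y, hy⟩ := by
  induction n generalizing x with
  | zero =>
    obtain rfl : x = y := h
    rfl
  | succ n ih =>
    obtain rfl | ⟨z, hz, hxz, h⟩ := h
    · rfl
    · exact (Adj.reachable (G := G.induce t) (u := ⟨x, hx⟩) (v := ⟨z, hst hz⟩) hxz).trans
        (ih h (hst hz))

end SimpleGraph

lemma Set.exists_subset_pair_of_ncard_le_two {α : Type} [Nonempty α] {S : Set α}
    (hfin : S.Finite) (hS : S.ncard ≤ 2) : ∃ a b, S ⊆ {a, b} := by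
  rcases hS.lt_or_eq with hS | hS
  · have : Finite S := hfin
    rcases ((Set.ncard_le_one_iff_subsingleton).mp (Nat.le_of_lt_succ hS)).eq_empty_or_singleton
      with rfl | ⟨a, rfl⟩
    exacts [⟨Classical.arbitrary α, Classical.arbitrary α, Set.empty_subset _⟩,
      ⟨a, a, Set.subset_insert _ _⟩]
  · obtain ⟨a, b, -, rfl⟩ := Set.ncard_eq_two.mp hS
    exact ⟨a, b, subset_rfl⟩

namespace STree

lemma realization_adj_inl_inr {t : STree} {u : t.NodeType} {b : t.Branch} :
    t.realization.Adj (.inl u) (.inr b) ↔ t.onBranch b u := by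
  simp [realization]

lemma not_treeAdj_root_left : ∀ (t : STree) (v : t.NodeType), ¬ t.treeAdj t.root v
  | leaf, _ => id
  | node _ _ _, _ => id

lemma not_treeAdj_root_right : ∀ (t : STree) (v : t.NodeType), ¬ t.treeAdj v t.root
  | leaf, _ => id
  | node _ _ _, .inl _ => id
  | node _ _ _, .inr _ => id

lemma onBranch_root : ∀ (t : STree) (b : t.Branch), t.onBranch b t.root
  | leaf, _ => trivial
  | node _ _ _, _ => trivial

def rootVertex (t : STree) : t.NodeType ⊕ t.Branch := .inl t.root

variable {ι : Type} {c : ι → STree} {g : SimpleGraph ι}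

lemma treeAdj_node_inr_inr_self {i : ι} {u v : (c i).NodeType} :
    (node ι c g).treeAdj (.inr ⟨i, u⟩) (.inr ⟨i, v⟩) ↔ (c i).treeAdj u v := by
  refine ⟨?_, fun h => .inl ⟨rfl, h⟩⟩
  rintro (⟨_, h⟩ | ⟨h, -⟩)
  exacts [h, (g.irrefl h).elim]

lemma treeAdj_node_inr_inr_of_ne {i j : ι} (hij : i ≠ j) {u : (c i).NodeType}
    {v : (c j).NodeType} :
    (node ι c g).treeAdj (.inr ⟨i, u⟩) (.inr ⟨j, v⟩) ↔
      g.Adj i j ∧ u = (c i).root ∧ v = (c j).root := by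
  refine ⟨?_, .inr⟩
  rintro (⟨h, -⟩ | h)
  exacts [(hij h).elim, h]

lemma onBranch_node_inr_self {i : ι} {b : (c i).Branch} {w : (c i).NodeType} :
    (node ι c g).onBranch ⟨i, b⟩ (.inr ⟨i, w⟩) ↔ (c i).onBranch b w :=
  ⟨fun ⟨_, h⟩ => h, fun h => ⟨rfl, h⟩⟩

lemma not_onBranch_node_inr_of_ne {i j : ι} (hij : j ≠ i) {b : (c i).Branch}
    {w : (c j).NodeType} : ¬ (node ι c g).onBranch ⟨i, b⟩ (.inr ⟨j, w⟩) :=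
  fun ⟨h, _⟩ => hij h

variable (c g) in
def lift (i : ι) : (c i).NodeType ⊕ (c i).Branch → (node ι c g).NodeType ⊕ (node ι c g).Branch
  | .inl u => .inl (.inr ⟨i, u⟩)
  | .inr b => .inr ⟨i, b⟩

lemma eq_rootVertex_or_exists_eq_lift (z : (node ι c g).NodeType ⊕ (node ι c g).Branch) :
    z = (node ι c g).rootVertex ∨ ∃ i y, z = lift c g i y := by
  rcases z with (⟨⟩ | ⟨i, u⟩) | ⟨i, b⟩
  exacts [.inl rfl, .inr ⟨i, .inl u, rfl⟩, .inr ⟨i, .inr b, rfl⟩]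

lemma lift_ne_rootVertex {i : ι} (y : (c i).NodeType ⊕ (c i).Branch) :
    lift c g i y ≠ (node ι c g).rootVertex := by
  rcases y with u | b
  · exact fun h => Sum.inr_ne_inl (Sum.inl.inj h)
  · exact Sum.inr_ne_inl

lemma eq_of_lift_eq_lift {i j : ι} {y : (c i).NodeType ⊕ (c i).Branch}
    {y' : (c j).NodeType ⊕ (c j).Branch} (h : lift c g i y = lift c g j y') : i = j := by
  rcases y with u | b <;> rcases y' with v | b'
  · exact (Sigma.mk.inj (Sum.inr.inj (Sum.inl.inj h))).1
  · exact (Sum.inl_ne_inr h).elim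
  · exact (Sum.inr_ne_inl h).elim
  · exact (Sigma.mk.inj (Sum.inr.inj h)).1

lemma lift_injective (i : ι) : Function.Injective (lift c g i) := by
  intro y y' h
  rcases y with u | b <;> rcases y' with v | b'
  · exact congrArg _ (eq_of_heq (Sigma.mk.inj (Sum.inr.inj (Sum.inl.inj h))).2)
  · exact (Sum.inl_ne_inr h).elim
  · exact (Sum.inr_ne_inl h).elim
  · exact congrArg _ (eq_of_heq (Sigma.mk.inj (Sum.inr.inj h)).2)

lemma realization_adj_lift_lift {i : ι} {y y' : (c i).NodeType ⊕ (c i).Branch} :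
    (node ι c g).realization.Adj (lift c g i y) (lift c g i y') ↔ (c i).realization.Adj y y' := by
  simp only [realization, SimpleGraph.fromRel_adj, (lift_injective i).ne_iff]
  refine and_congr_right fun _ => ?_
  rcases y with u | b <;> rcases y' with v | b'
  · exact or_congr treeAdj_node_inr_inr_self treeAdj_node_inr_inr_self
  · exact or_congr onBranch_node_inr_self onBranch_node_inr_self
  · exact or_congr onBranch_node_inr_self onBranch_node_inr_self
  · exact Iff.rfl

lemma realization_adj_lift_lift_of_ne {i j : ι} (hij : i ≠ j) {y : (c i).NodeType ⊕ (c i).Branch}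
    {y' : (c j).NodeType ⊕ (c j).Branch} :
    (node ι c g).realization.Adj (lift c g i y) (lift c g j y') ↔
      g.Adj i j ∧ y = (c i).rootVertex ∧ y' = (c j).rootVertex := by
  simp only [realization, SimpleGraph.fromRel_adj]
  rcases y with u | b <;> rcases y' with v | b'
  · change _ ∧ ((node ι c g).treeAdj _ _ ∨ (node ι c g).treeAdj _ _) ↔ _
    rw [treeAdj_node_inr_inr_of_ne hij, treeAdj_node_inr_inr_of_ne hij.symm, g.adj_comm j i]
    simp only [rootVertex, Sum.inl.injEq]
    exact ⟨fun ⟨_, h⟩ => h.elim id fun ⟨ha, hv, hu⟩ => ⟨ha, hu, hv⟩,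
      fun h => ⟨fun he => hij (eq_of_lift_eq_lift he), .inl h⟩⟩
  · exact iff_of_false (fun ⟨_, h⟩ => h.elim (not_onBranch_node_inr_of_ne hij)
      (not_onBranch_node_inr_of_ne hij)) fun ⟨_, _, h⟩ => Sum.inr_ne_inl h
  · exact iff_of_false (fun ⟨_, h⟩ => h.elim (not_onBranch_node_inr_of_ne hij.symm)
      (not_onBranch_node_inr_of_ne hij.symm)) fun ⟨_, h, _⟩ => Sum.inr_ne_inl h
  · exact iff_of_false (fun ⟨_, h⟩ => h.elim id id) fun ⟨_, h, _⟩ => Sum.inr_ne_inl h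

lemma realization_adj_rootVertex_lift {i : ι} {y : (c i).NodeType ⊕ (c i).Branch} :
    (node ι c g).realization.Adj (node ι c g).rootVertex (lift c g i y) ↔
      (c i).realization.Adj (c i).rootVertex y := by
  rcases y with v | b
  · exact iff_of_false (fun ⟨_, h⟩ => h.elim id id) fun ⟨_, h⟩ =>
      h.elim (not_treeAdj_root_left _ _) (not_treeAdj_root_right _ _)
  · exact iff_of_true (realization_adj_inl_inr.mpr trivial)
      (realization_adj_inl_inr.mpr (onBranch_root _ _))

variable (c g) in
def liftEmbedding (i : ι) : (c i).realization ↪g (node ι c g).realization :=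
  ⟨⟨lift c g i, lift_injective i⟩, realization_adj_lift_lift⟩

variable (c g) in
def childRootEmbedding : g ↪g (node ι c g).realization where
  toFun i := lift c g i (c i).rootVertex
  inj' _ _ h := eq_of_lift_eq_lift h
  map_rel_iff' {i j} := by
    by_cases hij : i = j
    · subst hij
      exact iff_of_false (SimpleGraph.irrefl _) g.irrefl
    · change (node ι c g).realization.Adj (lift c g i (c i).rootVertex)
        (lift c g j (c j).rootVertex) ↔ g.Adj i j
      simp only [realization_adj_lift_lift_of_ne hij, and_true]

variable {W : Type} {H : SimpleGraph W}

lemma not_adj_rootVertex_lift_rootVertex (i : ι) :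
    ¬ (node ι c g).realization.Adj (node ι c g).rootVertex (lift c g i (c i).rootVertex) :=
  realization_adj_rootVertex_lift.not.mpr (SimpleGraph.irrefl _)

/-- The root and the root of the `i`-th subtree separate the `i`-th part of the realization from
the rest. -/
lemma forall_eq_rootVertex_or_exists_eq_lift (hcut : ¬ HasSmallIndepCutset H)
    (f : H ↪g (node ι c g).realization) {a : W} {i : ι} {y : (c i).NodeType ⊕ (c i).Branch}
    (hfa : f a = lift c g i y) (hy : y ≠ (c i).rootVertex) (x : W) :
    f x = (node ι c g).rootVertex ∨ ∃ y, f x = lift c g i y := by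
  set S := f ⁻¹' {(node ι c g).rootVertex, lift c g i (c i).rootVertex}
  have hS : S.ncard ≤ 2 :=
    (Set.ncard_le_ncard_of_injOn f (fun _ h => h) f.injective.injOn
      ((Set.finite_singleton _).insert _)).trans <|
      (Set.ncard_insert_le _ _).trans (by rw [Set.ncard_singleton])
  have hSind : ∀ a ∈ S, ∀ b ∈ S, ¬ H.Adj a b := by
    have hnadj := not_adj_rootVertex_lift_rootVertex (c := c) (g := g) i
    rintro a (ha | ha) b (hb | hb) <;> rw [← f.map_adj_iff, ha, hb]
    exacts [SimpleGraph.irrefl _, hnadj, fun h => hnadj h.symm, SimpleGraph.irrefl _]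
  have hclosed : ∀ x x', x ∉ S → x' ∉ S → H.Adj x x' →
      (∃ y, f x = lift c g i y) → ∃ y, f x' = lift c g i y := by
    rintro x x' hx hx' hadj ⟨yx, hfx⟩
    rcases eq_rootVertex_or_exists_eq_lift (f x') with h | ⟨j, y', h⟩
    · exact (hx' (.inl h)).elim
    obtain rfl : j = i := by
      by_contra hji
      have hadj' := f.map_adj_iff.mpr hadj
      rw [hfx, h, realization_adj_lift_lift_of_ne (Ne.symm hji)] at hadj'
      exact hx (.inr (hfx.trans (congrArg _ hadj'.2.1)))
    exact ⟨y', h⟩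
  have ha : a ∉ S := by
    rintro (h | h)
    exacts [lift_ne_rootVertex y (hfa.symm.trans h), hy (lift_injective i (hfa.symm.trans h))]
  by_cases hx : x ∈ S
  · rcases hx with h | h
    exacts [.inl h, .inr ⟨_, h⟩]
  · exact .inr (forall_of_not_hasSmallIndepCutset hcut hS hSind hclosed ha ⟨y, hfa⟩ x hx)

lemma nonempty_embedding_child_of_lift_ne_rootVertex (htw : ¬ HasNonadjTwins H)
    (hcut : ¬ HasSmallIndepCutset H) (f : H ↪g (node ι c g).realization) {a : W} {i : ι}
    {y : (c i).NodeType ⊕ (c i).Branch} (hfa : f a = lift c g i y) (hy : y ≠ (c i).rootVertex) :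
    Nonempty (H ↪g (c i).realization) := by
  have hpart := forall_eq_rootVertex_or_exists_eq_lift hcut f hfa hy
  have htwin : ∀ x, (node ι c g).realization.Adj (node ι c g).rootVertex (f x) ↔
      (node ι c g).realization.Adj (lift c g i (c i).rootVertex) (f x) := by
    intro x
    rcases hpart x with h | ⟨y, h⟩
    · rw [h]
      exact iff_of_false (SimpleGraph.irrefl _) fun h' =>
        not_adj_rootVertex_lift_rootVertex i h'.symm
    · rw [h, realization_adj_rootVertex_lift, realization_adj_lift_lift]
  obtain ⟨f', hf'⟩ := f.exists_avoiding_twin htw (lift_ne_rootVertex _).symm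
    (not_adj_rootVertex_lift_rootVertex i) htwin
  refine f'.nonempty_of_forall_mem_range (liftEmbedding c g i) fun x => ?_
  obtain ⟨hne, h | h⟩ := hf' x
  · exact ⟨(c i).rootVertex, h.symm⟩
  · rcases hpart x with h' | ⟨y, h'⟩
    exacts [(hne (h.trans h')).elim, ⟨y, (h.trans h').symm⟩]

lemma nonempty_embedding_of_forall_lift_eq_rootVertex [Nontrivial W]
    (hcut : ¬ HasSmallIndepCutset H) (f : H ↪g (node ι c g).realization)
    (hroot : ∀ x i y, f x = lift c g i y → y = (c i).rootVertex) : Nonempty (H ↪g g) := by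
  refine f.nonempty_of_forall_mem_range (childRootEmbedding c g) fun x => ?_
  rcases eq_rootVertex_or_exists_eq_lift (f x) with hx | ⟨i, y, hx⟩
  · obtain ⟨x', hadj⟩ := exists_adj_of_not_hasSmallIndepCutset hcut x
    have hadj' := f.map_adj_iff.mpr hadj
    rcases eq_rootVertex_or_exists_eq_lift (f x') with h | ⟨j, y', h⟩
    · rw [hx, h] at hadj'
      exact (SimpleGraph.irrefl _ hadj').elim
    · rw [hx, h, hroot x' j y' h] at hadj'
      exact (not_adj_rootVertex_lift_rootVertex j hadj').elim
  · exact ⟨i, by rw [hx, hroot x i y hx]; rfl⟩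

theorem isEmpty_embedding_realization (hcard : 2 < Nat.card W) (htw : ¬ HasNonadjTwins H)
    (hcut : ¬ HasSmallIndepCutset H) (t : STree)
    (ht : ∀ p, t.IsInternalGraphOf p → IsEmpty (H ↪g p.2)) : IsEmpty (H ↪g t.realization) := by
  have : Finite W := Nat.finite_of_card_ne_zero (by omega)
  have : Nontrivial W := Finite.one_lt_card_iff_nontrivial.mp (by omega)
  induction t with
  | leaf => exact isEmpty_embedding_of_card_lt (W := PUnit ⊕ PUnit) (by simpa using hcard)
  | node ι c g ih =>
    refine ⟨fun f => ?_⟩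
    by_cases hpart : ∃ x i y, f x = lift c g i y ∧ y ≠ (c i).rootVertex
    · obtain ⟨x, i, y, hfx, hy⟩ := hpart
      obtain ⟨f'⟩ := nonempty_embedding_child_of_lift_ne_rootVertex htw hcut f hfx hy
      exact (ih i fun p hp => ht p (.child ι c g i p hp)).false f'
    · push Not at hpart
      obtain ⟨f'⟩ := nonempty_embedding_of_forall_lift_eq_rootVertex hcut f hpart
      exact (ht _ (.here ι c g)).false f'

lemma mem_of_isInternalGraphOf_buildTree :
    ∀ {L : List (Σ V : Type, SimpleGraph V)} {p}, (buildTree L).IsInternalGraphOf p → p ∈ L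
  | ⟨_, _⟩ :: _, _, .here _ _ _ => List.mem_cons_self
  | ⟨_, _⟩ :: _, _, .child _ _ _ _ _ hp =>
    List.mem_cons_of_mem _ (mem_of_isInternalGraphOf_buildTree hp)

end STree

section Twincut

variable {W : Type} {H : SimpleGraph W}

lemma isEmpty_embedding_realization_buildTree (hcard : 2 < Nat.card W)
    (htw : ¬ HasNonadjTwins H) (hcut : ¬ HasSmallIndepCutset H)
    {L : List (Σ V : Type, SimpleGraph V)} (hL : ∀ p ∈ L, IsEmpty (H ↪g p.2)) :
    IsEmpty (H ↪g (buildTree L).realization) :=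
  STree.isEmpty_embedding_realization hcard htw hcut _ fun p hp =>
    hL p (STree.mem_of_isInternalGraphOf_buildTree hp)

lemma isEmpty_embedding_of_mem_twincutList (hcard : 2 < Nat.card W)
    (htw : ¬ HasNonadjTwins H) (hcut : ¬ HasSmallIndepCutset H) :
    ∀ m, ∀ p ∈ twincutList m, IsEmpty (H ↪g p.2)
  | 0, _, hp => by simp [twincutList] at hp
  | m + 1, p, hp => by
    rcases List.mem_append.mp hp with hp | hp
    · exact isEmpty_embedding_of_mem_twincutList hcard htw hcut m p hp
    · rw [List.mem_singleton.mp hp]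
      exact isEmpty_embedding_realization_buildTree hcard htw hcut
        (isEmpty_embedding_of_mem_twincutList hcard htw hcut m)

theorem hasNonadjTwins_or_hasSmallIndepCutset_of_embedding_twincutG (hcard : 2 < Nat.card W)
    {k : ℕ} (hk : 1 ≤ k) (f : H ↪g (twincutG k).2) :
    HasNonadjTwins H ∨ HasSmallIndepCutset H := by
  by_contra! ⟨htw, hcut⟩
  match k, hk with
  | 1, _ =>
    exact (isEmpty_embedding_of_card_lt (W := PUnit) (by rw [Nat.card_unique]; omega)).false f
  | m + 2, _ =>
    exact (isEmpty_embedding_realization_buildTree hcard htw hcut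
      (isEmpty_embedding_of_mem_twincutList hcard htw hcut m)).false f

end Twincut

lemma cubeGraph_adj {x y : Fin 3 → Bool} :
    cubeGraph.Adj x y ↔ ∃ i, x i ≠ y i ∧ ∀ j, x j ≠ y j → j = i := by
  simp only [cubeGraph, SimpleGraph.fromRel_adj, ne_comm (a := y _), or_self, ExistsUnique]
  exact ⟨And.right, fun h => ⟨fun hxy => by obtain ⟨i, hi, -⟩ := h; exact hi (hxy ▸ rfl), h⟩⟩

instance : DecidableRel cubeGraph.Adj := fun _ _ => decidable_of_iff _ cubeGraph_adj.symm

lemma nat_card_cube : Nat.card (Fin 3 → Bool) = 8 := by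
  simp [Nat.card_eq_fintype_card]

lemma cubeGraph_not_hasNonadjTwins : ¬ HasNonadjTwins cubeGraph := by
  unfold HasNonadjTwins
  decide

/-- `z` and `w` may coincide with each other or with `x` and `y`, so this also covers the removal
of fewer than two vertices. -/
lemma cubeGraph_reachWithin (z w x y : Fin 3 → Bool) :
    cubeGraph.ReachWithin {v | v ≠ z ∧ v ≠ w ∨ v = y} 4 x y := by
  revert z w x y
  decide +kernel

lemma cubeGraph_induce_compl_connected {S : Set (Fin 3 → Bool)} (hS : S.ncard ≤ 2) :
    (cubeGraph.induce Sᶜ).Connected := by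
  obtain ⟨z, w, hzw⟩ := Set.exists_subset_pair_of_ncard_le_two (Set.toFinite S) hS
  have hsub : ∀ y ∉ S, {v | v ≠ z ∧ v ≠ w ∨ v = y} ⊆ Sᶜ := by
    rintro y hy v (⟨hz, hw⟩ | rfl) hv
    · rcases hzw hv with rfl | rfl
      exacts [hz rfl, hw rfl]
    · exact hy hv
  refine (SimpleGraph.connected_iff _).mpr ⟨fun ⟨x, hx⟩ ⟨y, hy⟩ =>
    (cubeGraph_reachWithin z w x y).reachable_induce (hsub y hy) hx hy, ?_⟩
  obtain ⟨v, hv⟩ : Sᶜ.Nonempty := Set.nonempty_compl.mpr fun h => by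
    rw [h, Set.ncard_univ, nat_card_cube] at hS
    omega
  exact ⟨⟨v, hv⟩⟩

lemma cubeGraph_not_hasSmallIndepCutset : ¬ HasSmallIndepCutset cubeGraph :=
  fun ⟨_, hS, _, hconn⟩ => hconn (cubeGraph_induce_compl_connected hS)

/-- the cube `Q₃` has no pair of non-adjacent twins and no
independent vertex cutset of size at most two; consequently it is not an
induced subgraph of any twincut graph. -/
theorem cube_not_induced_in_twincut :
    ¬ HasNonadjTwins cubeGraph ∧ ¬ HasSmallIndepCutset cubeGraph ∧
    ∀ k : ℕ, 1 ≤ k → IsEmpty (cubeGraph ↪g (twincutG k).2) := by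
  refine ⟨cubeGraph_not_hasNonadjTwins, cubeGraph_not_hasSmallIndepCutset,
    fun k hk => ⟨fun f => ?_⟩⟩
  have hcard : 2 < Nat.card (Fin 3 → Bool) := by rw [nat_card_cube]; norm_num
  rcases hasNonadjTwins_or_hasSmallIndepCutset_of_embedding_twincutG hcard hk f with h | h
  exacts [cubeGraph_not_hasNonadjTwins h, cubeGraph_not_hasSmallIndepCutset h]
end
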